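/- For every d ≥ 2, every k ≥ 2, and every p ≥ 1: Σ_{v ∈ F_d^{np}} #{(i_1,…,i_p) ∈ {1,…,2d}^p : g_{i_1}⋯g_{i_p} = v^k in F_d} ≤ (p+1)^4·(2√(2d−1))^p. -/

import Mathlib

open MeasureTheory Filter Topology
set_option maxHeartbeats 1000000
set_option synthInstance.maxHeartbeats 400000
noncomputable section
namespace SC

/-! ## Probability setup: tuples of i.i.d. uniform random permutations -/

instance (N : ℕ) : MeasurableSpace (Equiv.Perm (Fin N)) := ⊤

/-- The uniform probability measure on `d`-tuples of permutations of `N` letters,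
modelling `d` i.i.d. uniformly random permutations. -/
def unifPerms (N d : ℕ) : Measure (Fin d → Equiv.Perm (Fin N)) :=
  have : Nonempty (Equiv.Perm (Fin N)) := ⟨1⟩
  (PMF.uniformOfFintype _).toMeasure

/-- `ℂ^N` as a Hilbert space. -/
def Euc (N : ℕ) : Type := EuclideanSpace ℂ (Fin N)

instance (N : ℕ) : NormedAddCommGroup (Euc N) :=
  inferInstanceAs (NormedAddCommGroup (EuclideanSpace ℂ (Fin N)))
instance (N : ℕ) : InnerProductSpace ℂ (Euc N) :=
  inferInstanceAs (InnerProductSpace ℂ (EuclideanSpace ℂ (Fin N)))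
instance (N : ℕ) : FiniteDimensional ℂ (Euc N) :=
  inferInstanceAs (FiniteDimensional ℂ (EuclideanSpace ℂ (Fin N)))

/-- The all-ones vector `1_N ∈ ℂ^N`. -/
def ones (N : ℕ) : Euc N := (WithLp.equiv 2 _).symm (fun _ => 1)

/-- The subspace `{1_N}ᗮ ⊆ ℂ^N`. -/
def flatV (N : ℕ) : Submodule ℂ (Euc N) := (ℂ ∙ (ones N))ᗮ

/-- The unitary operator on `ℂ^N` induced by a permutation (the permutation matrix). -/
def permOp (N : ℕ) (σ : Equiv.Perm (Fin N)) : Euc N →L[ℂ] Euc N :=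
  ((LinearIsometryEquiv.piLpCongrLeft 2 ℂ ℂ σ).toLinearIsometry.toContinuousLinearMap :
    EuclideanSpace ℂ (Fin N) →L[ℂ] EuclideanSpace ℂ (Fin N))

/-- Compression of an operator to a (complete) subspace `V`; for an invariant subspace this
is the restriction `T|_V`. -/
def restrictTo {E : Type*} [NormedAddCommGroup E] [InnerProductSpace ℂ E]
    (V : Submodule ℂ E) [CompleteSpace V] (T : E →L[ℂ] E) : V →L[ℂ] V :=
  (V.orthogonalProjectionOnto).comp (T.comp V.subtypeL)

/-- `S_i^N`: the restriction of the `i`-th random permutation matrix to `{1_N}ᗮ`. -/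
def SOp (N d : ℕ) (σ : Fin d → Equiv.Perm (Fin N)) (i : Fin d) :
    ↥(flatV N) →L[ℂ] ↥(flatV N) :=
  restrictTo (flatV N) (permOp N (σ i))

/-- `A^N = S_1^N + S_1^{N*} + ⋯ + S_d^N + S_d^{N*}`: the adjacency matrix of the permutation
model of a random `2d`-regular graph on `N` vertices, restricted to `{1_N}ᗮ`. -/
def AOp (N d : ℕ) (σ : Fin d → Equiv.Perm (Fin N)) : ↥(flatV N) →L[ℂ] ↥(flatV N) :=
  ∑ i : Fin d, (SOp N d σ i + star (SOp N d σ i))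

end SC
/-! ## Noncommutative polynomials with matrix coefficients, and their evaluation -/

namespace SC

/-- A noncommutative `*`-polynomial in `d` variables with `D × D` matrix coefficients:
a finitely supported assignment of a matrix coefficient `A_w` to each word `w` in the
letters `s_1, …, s_d, s_1^*, …, s_d^*` (a letter `(i, false)` is `s_i`, and `(i, true)`
is `s_i^*`). -/
abbrev NCPoly (d D : ℕ) := (List (Fin d × Bool)) →₀ Matrix (Fin D) (Fin D) ℂ

/-- The formal adjoint of a word. -/
def wordStar {d : ℕ} (w : List (Fin d × Bool)) : List (Fin d × Bool) :=
  (w.map fun l => (l.1, !l.2)).reverse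

/-- The formal adjoint of a noncommutative polynomial. -/
def polyStar {d D : ℕ} (P : NCPoly d D) : NCPoly d D :=
  Finsupp.mapDomain wordStar (P.mapRange Matrix.conjTranspose (by simp))

variable {H : Type*} [NormedAddCommGroup H] [InnerProductSpace ℂ H] [CompleteSpace H]

/-- Evaluation of a word at a `d`-tuple of operators (`(i, false) ↦ u i`,
`(i, true) ↦ (u i)^*`), multiplied in the order in which the letters appear. -/
def wordEval {d : ℕ} (u : Fin d → H →L[ℂ] H) (w : List (Fin d × Bool)) : H →L[ℂ] H :=
  (w.map fun l => if l.2 then star (u l.1) else u l.1).prod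

/-- `Hᴰ` with its Hilbert space structure; operators on it model `M_D(ℂ) ⊗ B(H)`. -/
def Ten (D : ℕ) (H : Type*) : Type _ := PiLp 2 (fun _ : Fin D => H)

instance (D : ℕ) : NormedAddCommGroup (Ten D H) :=
  inferInstanceAs (NormedAddCommGroup (PiLp 2 (fun _ : Fin D => H)))
instance (D : ℕ) : InnerProductSpace ℂ (Ten D H) :=
  inferInstanceAs (InnerProductSpace ℂ (PiLp 2 (fun _ : Fin D => H)))
instance (D : ℕ) [CompleteSpace H] : CompleteSpace (Ten D H) :=
  inferInstanceAs (CompleteSpace (PiLp 2 (fun _ : Fin D => H)))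

/-- The operator `A ⊗ T` on `Hᴰ`, for a `D × D` matrix `A` and an operator `T` on `H`. -/
def matTensor {D : ℕ} (A : Matrix (Fin D) (Fin D) ℂ) (T : H →L[ℂ] H) :
    Ten D H →L[ℂ] Ten D H :=
  ((((PiLp.continuousLinearEquiv 2 ℂ (fun _ : Fin D => H)).symm :
      (∀ _ : Fin D, H) →L[ℂ] PiLp 2 (fun _ : Fin D => H)).comp
    (((ContinuousLinearMap.pi fun i : Fin D =>
        ∑ j : Fin D, A i j • (T.comp (ContinuousLinearMap.proj j))) :
        (∀ _ : Fin D, H) →L[ℂ] ∀ _ : Fin D, H).comp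
      ((PiLp.continuousLinearEquiv 2 ℂ (fun _ : Fin D => H)) :
        PiLp 2 (fun _ : Fin D => H) →L[ℂ] ∀ _ : Fin D, H))) :
    PiLp 2 (fun _ : Fin D => H) →L[ℂ] PiLp 2 (fun _ : Fin D => H))

/-- Evaluation `P(u, u^*) = Σ_w A_w ⊗ w(u, u^*)` of a noncommutative polynomial at a
`d`-tuple of operators on `H`, as an operator on `Hᴰ`. -/
def polyEval {d D : ℕ} (P : NCPoly d D) (u : Fin d → H →L[ℂ] H) :
    Ten D H →L[ℂ] Ten D H :=
  P.sum fun w A => matTensor A (wordEval u w)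

/-- The norm `‖P‖_{M_D(ℂ) ⊗ C*(F_d)}`: the supremum of `‖P(U, U^*)‖` over all `d`-tuples
of unitary matrices of any dimension. -/
def cstarNorm {d D : ℕ} (P : NCPoly d D) : ℝ :=
  ⨆ n : ℕ, ⨆ U : Fin d → Matrix.unitaryGroup (Fin n) ℂ,
    ‖polyEval (H := EuclideanSpace ℂ (Fin n)) P
      (fun i => Matrix.toEuclideanCLM (𝕜 := ℂ) (U i : Matrix (Fin n) (Fin n) ℂ))‖

end SC

/-! ## The left regular representation of the free group on `ℓ²(F_d)` -/

namespace SC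

/-- Composition with (the inverse of) a bijection of index sets, as a map of `ℓ²` spaces. -/
def lpShift {α β : Type*} (e : α ≃ β) (f : lp (fun _ : α => ℂ) 2) :
    lp (fun _ : β => ℂ) 2 :=
  ⟨fun b => f (e.symm b), by
    refine memℓp_gen ?_
    have hf : Summable fun a => ‖f a‖ ^ ENNReal.toReal 2 :=
      (memℓp_gen_iff (by norm_num)).mp (lp.memℓp f)
    exact (Equiv.summable_iff e.symm).mpr hf⟩

/-- Composition with (the inverse of) a bijection of index sets, as a linear isometry of
`ℓ²` spaces. -/
def lpCongr {α β : Type*} (e : α ≃ β) :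
    lp (fun _ : α => ℂ) 2 →ₗᵢ[ℂ] lp (fun _ : β => ℂ) 2 where
  toFun := lpShift e
  map_add' f g := by
    apply Subtype.ext
    funext b
    simp only [lpShift, lp.coeFn_add, Pi.add_apply]
  map_smul' c f := by
    apply Subtype.ext
    funext b
    simp only [lpShift, lp.coeFn_smul, Pi.smul_apply, RingHom.id_apply]
  norm_map' f := by
    show ‖lpShift e f‖ = ‖f‖
    rw [lp.norm_eq_tsum_rpow (by norm_num) f, lp.norm_eq_tsum_rpow (by norm_num) (lpShift e f)]
    congr 1
    exact Equiv.tsum_eq e.symm (fun a => ‖f a‖ ^ ENNReal.toReal 2)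

/-- `ℓ²(F_d)`. -/
def L2F (d : ℕ) : Type := lp (fun _ : FreeGroup (Fin d) => ℂ) 2

instance (d : ℕ) : NormedAddCommGroup (L2F d) :=
  inferInstanceAs (NormedAddCommGroup (lp (fun _ : FreeGroup (Fin d) => ℂ) 2))
instance (d : ℕ) : InnerProductSpace ℂ (L2F d) :=
  inferInstanceAs (InnerProductSpace ℂ (lp (fun _ : FreeGroup (Fin d) => ℂ) 2))
instance (d : ℕ) : CompleteSpace (L2F d) :=
  inferInstanceAs (CompleteSpace (lp (fun _ : FreeGroup (Fin d) => ℂ) 2))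

/-- The left regular representation: `λ(g) δ_h = δ_{gh}`, i.e. `(λ(g) f)(h) = f(g⁻¹ h)`,
as a bounded operator on `ℓ²(F_d)`. -/
def leftRegOp {d : ℕ} (g : FreeGroup (Fin d)) : L2F d →L[ℂ] L2F d :=
  ((lpCongr (Equiv.mulLeft g)).toContinuousLinearMap :
    lp (fun _ : FreeGroup (Fin d) => ℂ) 2 →L[ℂ] lp (fun _ : FreeGroup (Fin d) => ℂ) 2)

/-- The free generators `s_i := λ(g_i)` of the free group factor. -/
def sTuple (d : ℕ) : Fin d → (L2F d →L[ℂ] L2F d) := fun i => leftRegOp (FreeGroup.of i)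

/-- `δ_e ∈ ℓ²(F_d)`. -/
def deltaE (d : ℕ) : L2F d :=
  (lp.single 2 (1 : FreeGroup (Fin d)) (1 : ℂ) : lp (fun _ : FreeGroup (Fin d) => ℂ) 2)

/-- The canonical trace `τ(a) = ⟨δ_e, a δ_e⟩` on `B(ℓ²(F_d))`. -/
def tauState {d : ℕ} (T : L2F d →L[ℂ] L2F d) : ℂ :=
  inner ℂ (deltaE d) (T (deltaE d))

/-- The `i`-th canonical basis vector tensored with `δ_e`, in `(ℓ²(F_d))ᴰ`. -/
def basTen (d D : ℕ) (i : Fin D) : Ten D (L2F d) :=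
  (WithLp.equiv 2 (∀ _ : Fin D, L2F d)).symm (fun j => if j = i then deltaE d else 0)

/-- The trace `tr_D ⊗ τ` on `M_D(ℂ) ⊗ B(ℓ²(F_d))`. -/
def trDtau {d D : ℕ} (Y : Ten D (L2F d) →L[ℂ] Ten D (L2F d)) : ℂ :=
  (D : ℂ)⁻¹ * ∑ i : Fin D, (inner ℂ (basTen d D i) (Y (basTen d D i)) : ℂ)

end SC

/-! ## Smooth functions, `C^m` norms, and compactly supported distributions -/

namespace SC

/-- The space of `C^∞` functions `ℝ → ℝ`, as a subspace of `ℝ → ℝ`. -/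
def SmoothR : Submodule ℝ (ℝ → ℝ) where
  carrier := {f | ContDiff ℝ (⊤ : ℕ∞) f}
  add_mem' := fun {a b} (hf : ContDiff ℝ (⊤ : ℕ∞) a) (hg : ContDiff ℝ (⊤ : ℕ∞) b) => hf.add hg
  zero_mem' := show ContDiff ℝ (⊤ : ℕ∞) (0 : ℝ → ℝ) from contDiff_const
  smul_mem' := fun c f (hf : ContDiff ℝ (⊤ : ℕ∞) f) => hf.const_smul c

lemma mem_SmoothR {f : ℝ → ℝ} : f ∈ SmoothR ↔ ContDiff ℝ (⊤ : ℕ∞) f := Iff.rfl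

/-- `sup_{x ∈ [a, b]} |f x|`. -/
def supAbsOn (a b : ℝ) (f : ℝ → ℝ) : ℝ := ⨆ x : Set.Icc a b, |f (x : ℝ)|

/-- The `C^m` norm `‖f‖_{C^m[-K, K]} = Σ_{j=0}^m sup_{x ∈ [-K, K]} |f^{(j)}(x)|`. -/
def CmNorm (m : ℕ) (K : ℝ) (f : ℝ → ℝ) : ℝ :=
  ∑ j ∈ Finset.range (m + 1), supAbsOn (-K) K (iteratedDeriv j f)

/-- A linear functional on `C^∞(ℝ)` is a compactly supported distribution if it satisfies
`|ν(f)| ≤ c ‖f‖_{C^m[-K, K]}` for some `c, K > 0` and `m ∈ ℤ_+`. -/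
def IsCSDist (ν : ↥SmoothR →ₗ[ℝ] ℝ) : Prop :=
  ∃ (c K : ℝ) (m : ℕ), 0 < c ∧ 0 < K ∧ ∀ f : ↥SmoothR, |ν f| ≤ c * CmNorm m K (f : ℝ → ℝ)

/-- `f` vanishes on a neighborhood of `A`. -/
def VanishesNear (f : ℝ → ℝ) (A : Set ℝ) : Prop :=
  ∃ U : Set ℝ, IsOpen U ∧ A ⊆ U ∧ ∀ x ∈ U, f x = 0

/-- `supp ν ⊆ A`: the distribution `ν` kills every smooth function vanishing on a
neighborhood of `A`. -/
def SuppSubset (ν : ↥SmoothR →ₗ[ℝ] ℝ) (A : Set ℝ) : Prop :=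
  ∀ f : ↥SmoothR, VanishesNear (f : ℝ → ℝ) A → ν f = 0

/-- The monomial `x ↦ x^p` as a smooth function. -/
def monomial (p : ℕ) : ↥SmoothR := ⟨fun x => x ^ p, mem_SmoothR.mpr (contDiff_id.pow p)⟩

/-- A real polynomial, as a smooth function. -/
def polySmooth (h : Polynomial ℝ) : ↥SmoothR :=
  ⟨fun x => h.eval x, mem_SmoothR.mpr (by
    induction h using Polynomial.induction_on' with
    | add p q hp hq => simpa using hp.add hq
    | monomial n a =>
        simpa [Polynomial.eval_monomial] using contDiff_const.mul (contDiff_id.pow n))⟩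

/-- The `L^β` norm of `g` on `[0, 2π]`. -/
def lpNormOn (β : ℝ) (g : ℝ → ℝ) : ℝ :=
  (∫ θ in (0 : ℝ)..(2 * Real.pi), |g θ| ^ β) ^ (1 / β)

/-- `sup_{x ∈ [-K, K]} |h(x)|` for a polynomial `h`. -/
def C0normPoly (K : ℝ) (h : Polynomial ℝ) : ℝ := supAbsOn (-K) K (fun x => h.eval x)

end SC

/-! ## Words in the letters `g_0, g_1, …, g_d, g_1⁻¹, …, g_d⁻¹` and word counts -/

namespace SC

/-- The letter `g_j` (for `0 ≤ j ≤ 2d`): `g_0 = e`, `g_i = `the `i`-th free generator for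
`1 ≤ i ≤ d`, and `g_{d+i} = g_i⁻¹`, as an element of the free group `F_d`. -/
def letterGrp (d : ℕ) (j : Fin (2 * d + 1)) : FreeGroup (Fin d) :=
  if h : (j : ℕ) = 0 then 1
  else if h2 : (j : ℕ) ≤ d then FreeGroup.of ⟨(j : ℕ) - 1, by omega⟩
  else (FreeGroup.of ⟨(j : ℕ) - 1 - d, by have := j.isLt; omega⟩)⁻¹

/-- The reduction in `F_d` of a word in the letters `g_0, …, g_{2d}`. -/
def wordGrp (d : ℕ) (w : List (Fin (2 * d + 1))) : FreeGroup (Fin d) :=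
  (w.map (letterGrp d)).prod

/-- The letter `g_j`, substituted by the corresponding restricted permutation matrix:
`g_0 ↦ 1`, `g_i ↦ S_i^N` and `g_{d+i} ↦ S_i^{N*} = (S_i^N)⁻¹` for `1 ≤ i ≤ d`. -/
def letterOp (N d : ℕ) (σ : Fin d → Equiv.Perm (Fin N)) (j : Fin (2 * d + 1)) :
    ↥(flatV N) →L[ℂ] ↥(flatV N) :=
  if h : (j : ℕ) = 0 then 1
  else if h2 : (j : ℕ) ≤ d then SOp N d σ ⟨(j : ℕ) - 1, by omega⟩
  else star (SOp N d σ ⟨(j : ℕ) - 1 - d, by have := j.isLt; omega⟩)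

/-- `w(S^N)`: a word in the letters `g_0, …, g_{2d}`, evaluated at the restricted random
permutation matrices (multiplied in the order in which the letters appear in `w`). -/
def wordOpFull (N d : ℕ) (σ : Fin d → Equiv.Perm (Fin N)) (w : List (Fin (2 * d + 1))) :
    ↥(flatV N) →L[ℂ] ↥(flatV N) :=
  (w.map (letterOp N d σ)).prod

/-- `v ∈ F_d` is a non-power: `v ≠ e` and `v` is not a proper power `u^k`, `k ≥ 2`. -/
def NonPower {d : ℕ} (v : FreeGroup (Fin d)) : Prop :=
  v ≠ 1 ∧ ∀ (u : FreeGroup (Fin d)) (k : ℕ), 2 ≤ k → v ≠ u ^ k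

/-- The letter `g_j` for `j ∈ {1, …, 2d}` (first the `d` generators, then their inverses). -/
def gen2d (d : ℕ) (j : Fin (2 * d)) : FreeGroup (Fin d) :=
  if h : (j : ℕ) < d then FreeGroup.of ⟨(j : ℕ), h⟩
  else (FreeGroup.of ⟨(j : ℕ) - d, by have := j.isLt; omega⟩)⁻¹

/-- The number of `p`-tuples `(i_1, …, i_p) ∈ {1, …, 2d}^p` with `g_{i_1} ⋯ g_{i_p} = x`
in `F_d`. -/
def wordCount (d p : ℕ) (x : FreeGroup (Fin d)) : ℕ :=
  Set.ncard {t : Fin p → Fin (2 * d) | (List.ofFn fun i => gen2d d (t i)).prod = x}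

/-- The polynomial `g_q(x) = Π_{j=1}^{q-1} (1 - jx)^{d_j}`, `d_j = min(d, ⌊q/(j+1)⌋)`. -/
def gPoly (d q : ℕ) : Polynomial ℝ :=
  ∏ j ∈ Finset.Icc 1 (q - 1),
    ((1 : Polynomial ℝ) - (j : ℝ) • Polynomial.X) ^ (min d (q / (j + 1)))

/-- The normalized expected trace `E[tr_N w(S^N)]` (trace normalized by `N`). -/
def expTrWord (N d : ℕ) (w : List (Fin (2 * d + 1))) : ℂ :=
  ∫ σ, (N : ℂ)⁻¹ * LinearMap.trace ℂ ↥(flatV N) (wordOpFull N d σ w : ↥(flatV N) →ₗ[ℂ] ↥(flatV N))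
    ∂(unifPerms N d)

end SC

/-! ## Expected traces of functions of `P(S^N, S^{N*})` -/

namespace SC

/-- `tr` of a linear endomorphism of `(ℂ^N ⊖ 1_N)ᴰ`. -/
def trTen (N D : ℕ) (T : Ten D ↥(flatV N) →L[ℂ] Ten D ↥(flatV N)) : ℂ :=
  LinearMap.trace ℂ (Ten D ↥(flatV N)) (T : Ten D ↥(flatV N) →ₗ[ℂ] Ten D ↥(flatV N))

/-- `E[tr_{DN} h(P(S^N, S^{N*}))]` for a real polynomial test function `h` (the polynomial
functional calculus; the trace is normalized by `DN`). -/
def expTrPoly (N d D : ℕ) (P : NCPoly d D) (h : Polynomial ℝ) : ℂ :=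
  ∫ σ, ((D : ℂ) * (N : ℂ))⁻¹ *
      trTen N D (Polynomial.aeval (polyEval P (SOp N d σ)) (h.map (algebraMap ℝ ℂ)))
    ∂(unifPerms N d)

/-- `E[tr_{DN} h(P(S^N, S^{N*}))]` for a test function `h : ℝ → ℝ` (continuous functional
calculus; the trace is normalized by `DN`). -/
def expTrSmooth (N d D : ℕ) (P : NCPoly d D) (h : ℝ → ℝ) : ℂ :=
  ∫ σ, ((D : ℂ) * (N : ℂ))⁻¹ * trTen N D (cfc h (polyEval P (SOp N d σ))) ∂(unifPerms N d)

/-- `(tr_D ⊗ τ)(h(P(s, s^*)))` for a real polynomial test function `h`. -/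
def limTrPoly (d D : ℕ) (P : NCPoly d D) (h : Polynomial ℝ) : ℂ :=
  trDtau (Polynomial.aeval (polyEval P (sTuple d)) (h.map (algebraMap ℝ ℂ)))

/-- `E[tr_N (A^N)^p]`. -/
def expTrA (N d p : ℕ) : ℂ :=
  ∫ σ, (N : ℂ)⁻¹ *
      LinearMap.trace ℂ ↥(flatV N) ((AOp N d σ ^ p : ↥(flatV N) →L[ℂ] ↥(flatV N)) :
        ↥(flatV N) →ₗ[ℂ] ↥(flatV N))
    ∂(unifPerms N d)

/-- `ρ_m` from the staircase theorem. -/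
def rho (d m : ℕ) : ℝ :=
  if (2 * (m : ℝ) - 1) ≤ Real.sqrt (2 * d - 1) then 2 * Real.sqrt (2 * d - 1)
  else (2 * (m : ℝ) - 1) + (2 * (d : ℝ) - 1) / (2 * (m : ℝ) - 1)

/-- `m_* = ⌊(√(2d-1) + 1)/2⌋`, the largest `m` with `2m - 1 ≤ √(2d-1)`. -/
def mStar (d : ℕ) : ℕ := ⌊(Real.sqrt (2 * d - 1) + 1) / 2⌋₊

/-- The degree of a noncommutative polynomial is at most `q₀`. -/
def DegLE {d D : ℕ} (P : NCPoly d D) (q₀ : ℕ) : Prop :=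
  ∀ w ∈ P.support, w.length ≤ q₀

end SC

/-! Put `s = √(2d - 1)`. On the Cayley graph of `F_d` (the `2d`-regular tree) the weight
`x ↦ s^(-|x|)` satisfies `Σ_l s^(-|l x|) ≤ 2s · s^(-|x|)`: one neighbour of `x ≠ e` is closer to
the root and `2d - 1` are farther. By induction on `p`, the number of words of length `p`
evaluating to `x` is therefore at most `(2s)^p s^(-|x|)`, and it vanishes when `|x| > p`.

Write the reduced word of `v` as `c r c⁻¹` with `r` cyclically reduced. Then
`|v^k| = 2|c| + k|r| ≥ 2|c r|`, and `v` is determined by `(|c|, c r)`. Since the sphere of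
radius `j` in `F_d` has at most `2 (2d - 1)^j` elements, summing `(2s)^p (2d - 1)^(-|c r|)` over
the pairs with `|c r| ≤ p` gives at most `(2s)^p (p + 1) · 2 (p + 1)`. -/

namespace FreeGroup

open Finset

variable {α : Type*} [DecidableEq α]

theorem toWord_mk_singleton_mul (l : α × Bool) (x : FreeGroup α) :
    (mk [l] * x).toWord =
      if x.toWord.head? = some (l.1, !l.2) then x.toWord.tail else l :: x.toWord := by
  rw [toWord_mul, toWord_mk, reduce_singleton]
  rcases h : x.toWord with _ | ⟨b, L⟩
  · simp
  · have hred : reduce (b :: L) = b :: L := h ▸ reduce_toWord x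
    simp only [List.singleton_append, reduce.cons, hred, List.head?_cons, Option.some.injEq,
      List.tail_cons]
    obtain ⟨b1, b2⟩ := b
    obtain ⟨l1, l2⟩ := l
    cases b2 <;> cases l2 <;> simp [eq_comm]

theorem norm_mk_singleton_mul_add_one {l : α × Bool} {x : FreeGroup α}
    (h : x.toWord.head? = some (l.1, !l.2)) : norm (mk [l] * x) + 1 = norm x := by
  rw [norm, norm, toWord_mk_singleton_mul, if_pos h, List.length_tail]
  have : x.toWord ≠ [] := by rintro h'; simp [h'] at h
  have := List.length_pos_iff.2 this
  omega

theorem norm_mk_singleton_mul {l : α × Bool} {x : FreeGroup α}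
    (h : x.toWord.head? ≠ some (l.1, !l.2)) : norm (mk [l] * x) = norm x + 1 := by
  rw [norm, norm, toWord_mk_singleton_mul, if_neg h, List.length_cons]

theorem exists_norm_mk_singleton_mul {x : FreeGroup α} (hx : x ≠ 1) :
    ∃ l₀ : α × Bool, norm (mk [l₀] * x) + 1 = norm x ∧
      ∀ l ≠ l₀, norm (mk [l] * x) = norm x + 1 := by
  obtain ⟨b, L, hbL⟩ := List.exists_cons_of_ne_nil (toWord_eq_nil_iff.not.2 hx)
  refine ⟨(b.1, !b.2), norm_mk_singleton_mul_add_one (by simp [hbL]), fun l hl => ?_⟩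
  refine norm_mk_singleton_mul fun h => hl ?_
  simp only [hbL, List.head?_cons, Option.some.injEq] at h
  simp [h]

theorem norm_le_norm_mk_singleton_mul_add_one (l : α × Bool) (x : FreeGroup α) :
    norm x ≤ norm (mk [l] * x) + 1 :=
  calc norm x = norm ((mk [l])⁻¹ * (mk [l] * x)) := by rw [inv_mul_cancel_left]
    _ ≤ norm (mk [l])⁻¹ + norm (mk [l] * x) := norm_mul_le _ _
    _ = norm (mk [l] * x) + 1 := by
      rw [norm_inv_eq, norm, toWord_mk, reduce_singleton, List.length_singleton, add_comm]

open reduceCyclically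

theorem norm_pow_of_ne_zero (x : FreeGroup α) {k : ℕ} (hk : k ≠ 0) :
    norm (x ^ k) =
      2 * (conjugator x.toWord).length + k * (reduceCyclically x.toWord).length := by
  rw [norm, toWord_pow, reduce_flatten_replicate isReduced_toWord, if_neg hk]
  simp only [List.length_append, List.length_flatten, List.map_replicate, List.sum_replicate,
    smul_eq_mul, invRev_length]
  ring

def cyclicCode (x : FreeGroup α) : ℕ × FreeGroup α :=
  ((conjugator x.toWord).length, mk (conjugator x.toWord ++ reduceCyclically x.toWord))

theorem toWord_cyclicCode_snd (x : FreeGroup α) :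
    (cyclicCode x).2.toWord = conjugator x.toWord ++ reduceCyclically x.toWord := by
  rw [cyclicCode, toWord_mk, IsReduced.reduce_eq]
  refine (isReduced_toWord (x := x)).infix ⟨[], invRev (conjugator x.toWord), ?_⟩
  rw [List.nil_append, conj_conjugator_reduceCyclically]

theorem cyclicCode_injective : Function.Injective (cyclicCode (α := α)) := by
  intro x y h
  obtain ⟨hc, hr⟩ := List.append_inj
    (by rw [← toWord_cyclicCode_snd, ← toWord_cyclicCode_snd, h]) (congrArg Prod.fst h)
  rw [← mk_toWord (x := x), ← mk_toWord (x := y), ← conj_conjugator_reduceCyclically x.toWord,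
    ← conj_conjugator_reduceCyclically y.toWord, hc, hr]

theorem two_mul_norm_cyclicCode_snd_le {k : ℕ} (hk : 2 ≤ k) (x : FreeGroup α) :
    2 * norm (cyclicCode x).2 ≤ norm (x ^ k) := by
  rw [norm, toWord_cyclicCode_snd, List.length_append, norm_pow_of_ne_zero x (by omega)]
  nlinarith

theorem cyclicCode_fst_le_norm_snd (x : FreeGroup α) :
    (cyclicCode x).1 ≤ norm (cyclicCode x).2 := by
  rw [norm, toWord_cyclicCode_snd, List.length_append, cyclicCode]
  omega

variable [Fintype α]

theorem sum_inv_pow_norm_mk_singleton_mul_le {s : ℝ} (hs : 0 < s)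
    (hs2 : s ^ 2 = 2 * Fintype.card α - 1) (x : FreeGroup α) :
    ∑ l : α × Bool, s⁻¹ ^ norm (mk [l] * x) ≤ 2 * s * s⁻¹ ^ norm x := by
  have hcard : Fintype.card (α × Bool) = 2 * Fintype.card α := by simp [mul_comm]
  rcases eq_or_ne x 1 with rfl | hx
  · have hα : (1 : ℝ) ≤ Fintype.card α := by
      have : (0 : ℝ) < 2 * Fintype.card α - 1 := hs2 ▸ by positivity
      exact_mod_cast Nat.one_le_iff_ne_zero.2 fun h => by simp [h] at this; linarith
    simp only [mul_one, norm, toWord_mk, reduce_singleton, List.length_singleton, pow_one,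
      toWord_one, List.length_nil, pow_zero, Finset.sum_const, Finset.card_univ, hcard,
      nsmul_eq_mul, Nat.cast_mul, Nat.cast_ofNat]
    rw [mul_inv_le_iff₀ hs]
    nlinarith
  · obtain ⟨l₀, h₀, hup⟩ := exists_norm_mk_singleton_mul hx
    have hq : ((Fintype.card (α × Bool) - 1 : ℕ) : ℝ) = s ^ 2 := by
      rw [Nat.cast_sub (Fintype.card_pos_iff.2 ⟨l₀⟩), hcard, hs2]
      push_cast
      ring
    rw [← Finset.add_sum_erase _ _ (Finset.mem_univ l₀), Finset.sum_congr rfl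
      fun l hl => by rw [hup l (Finset.ne_of_mem_erase hl)], Finset.sum_const,
      Finset.card_erase_of_mem (Finset.mem_univ _), Finset.card_univ, nsmul_eq_mul, hq, ← h₀]
    have hss : s * s⁻¹ = 1 := mul_inv_cancel₀ hs.ne'
    exact le_of_eq <| by linear_combination (s⁻¹ ^ norm (mk [l₀] * x) * (s * s⁻¹ - 1)) * hss

theorem card_filter_norm_mk_singleton_mul_le {x : FreeGroup α} (hx : x ≠ 1) :
    #{l | norm (mk [l] * x) = norm x + 1} ≤ 2 * Fintype.card α - 1 := by
  obtain ⟨l₀, h₀, -⟩ := exists_norm_mk_singleton_mul hx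
  calc #{l | norm (mk [l] * x) = norm x + 1} ≤ #(univ.erase l₀) :=
        card_le_card fun l hl => mem_erase.2 ⟨by rintro rfl; simp at hl; omega, mem_univ l⟩
    _ = 2 * Fintype.card α - 1 := by simp [card_erase_of_mem, mul_comm]

theorem exists_card_filter_norm_eq_succ_le (S : Finset (FreeGroup α)) (j : ℕ) :
    ∃ S' : Finset (FreeGroup α), (∀ y ∈ S', norm y = j) ∧
      #{x ∈ S | norm x = j + 1} ≤ ∑ y ∈ S', #{l | norm (mk [l] * y) = norm y + 1} := by
  set T := {x ∈ S | norm x = j + 1}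
  set S' := T.image fun x => mk x.toWord.tail
  have hS' : ∀ y ∈ S', norm y = j := by
    simp only [S', T, mem_image, mem_filter]
    rintro _ ⟨x, ⟨-, hx⟩, rfl⟩
    rw [norm, toWord_mk, (isReduced_toWord.infix (List.tail_suffix _).isInfix).reduce_eq,
      List.length_tail, ← norm, hx, Nat.add_sub_cancel]
  have hT : T ⊆ S'.biUnion fun y =>
      ({l | norm (mk [l] * y) = norm y + 1} : Finset _).image (mk [·] * y) := by
    intro x hxT
    obtain ⟨b, L, hbL⟩ : ∃ b L, x.toWord = b :: L := List.exists_cons_of_ne_nil fun h => by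
      simpa [norm, h] using (mem_filter.1 hxT).2
    have hy : mk L ∈ S' := mem_image.2 ⟨x, hxT, by rw [hbL, List.tail_cons]⟩
    have hx : mk [b] * mk L = x := by rw [mul_mk, List.singleton_append, ← hbL, mk_toWord]
    refine mem_biUnion.2 ⟨mk L, hy, mem_image.2 ⟨b, ?_, hx⟩⟩
    rw [mem_filter, hx, hS' _ hy, (mem_filter.1 hxT).2]
    exact ⟨mem_univ b, rfl⟩
  exact ⟨S', hS',
    (card_le_card hT).trans (card_biUnion_le.trans (sum_le_sum fun _ _ => card_image_le))⟩

theorem card_filter_norm_eq_le (S : Finset (FreeGroup α)) (j : ℕ) :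
    #{y ∈ S | norm y = j} ≤ 2 * (2 * Fintype.card α - 1) ^ j := by
  induction j generalizing S with
  | zero =>
    calc #{y ∈ S | norm y = 0} ≤ #{(1 : FreeGroup α)} :=
          card_le_card fun y hy => by simpa [norm_eq_zero] using (mem_filter.1 hy).2
      _ ≤ 2 * (2 * Fintype.card α - 1) ^ 0 := by simp
  | succ j ih =>
    obtain ⟨S', hS', hle⟩ := exists_card_filter_norm_eq_succ_le S j
    refine hle.trans ?_
    rcases j with _ | j
    · have hS'1 : #S' ≤ 1 := card_le_one.2 fun a ha b hb => by
        rw [norm_eq_zero.1 (hS' a ha), norm_eq_zero.1 (hS' b hb)]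
      calc _ ≤ ∑ y ∈ S', Fintype.card (α × Bool) := sum_le_sum fun _ _ => card_le_univ _
        _ ≤ 1 * (2 * Fintype.card α) := by
          rw [sum_const, smul_eq_mul, Fintype.card_prod, Fintype.card_bool, mul_comm 2]
          gcongr
        _ ≤ 2 * (2 * Fintype.card α - 1) ^ (0 + 1) := by rw [zero_add, pow_one]; omega
    · have hS'card : #S' ≤ 2 * (2 * Fintype.card α - 1) ^ (j + 1) := by
        simpa [filter_true_of_mem hS'] using ih S'
      calc _ ≤ ∑ y ∈ S', (2 * Fintype.card α - 1) := sum_le_sum fun y hy =>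
            card_filter_norm_mk_singleton_mul_le fun h => by simpa [h] using hS' y hy
        _ ≤ _ := by rw [sum_const, smul_eq_mul, pow_succ _ (j + 1), ← mul_assoc]; gcongr

theorem sum_inv_pow_norm_le [Nonempty α] (S : Finset (FreeGroup α)) {p : ℕ}
    (hS : ∀ y ∈ S, norm y ≤ p) :
    ∑ y ∈ S, (2 * Fintype.card α - 1 : ℝ)⁻¹ ^ norm y ≤ 2 * (p + 1) := by
  set q : ℝ := 2 * Fintype.card α - 1
  have hq : 0 < q := by
    have : (1 : ℝ) ≤ Fintype.card α := by exact_mod_cast Fintype.card_pos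
    simp only [q]; linarith
  have hcount (j : ℕ) : (#{y ∈ S | norm y = j} : ℝ) ≤ 2 * q ^ j := by
    have h1 : 1 ≤ 2 * Fintype.card α := by have := Fintype.card_pos (α := α); omega
    calc (#{y ∈ S | norm y = j} : ℝ) ≤ ((2 * (2 * Fintype.card α - 1) ^ j : ℕ) : ℝ) := by
          exact_mod_cast card_filter_norm_eq_le S j
      _ = 2 * q ^ j := by push_cast [Nat.cast_sub h1]; rfl
  rw [← sum_fiberwise_of_maps_to (g := norm) (t := range (p + 1))
    fun y hy => mem_range.2 (Nat.lt_succ_of_le (hS y hy))]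
  calc ∑ j ∈ range (p + 1), ∑ y ∈ S with norm y = j, q⁻¹ ^ norm y
      = ∑ j ∈ range (p + 1), (#{y ∈ S | norm y = j} : ℝ) * q⁻¹ ^ j := by
        refine sum_congr rfl fun j _ => ?_
        rw [sum_congr rfl fun y hy => by rw [(mem_filter.1 hy).2], sum_const, nsmul_eq_mul]
    _ ≤ ∑ j ∈ range (p + 1), 2 * q ^ j * q⁻¹ ^ j :=
        sum_le_sum fun j _ => by gcongr; exact hcount j
    _ = 2 * (p + 1) := by
        simp [mul_assoc, mul_inv_cancel₀ (pow_ne_zero _ hq.ne'), mul_comm]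

theorem sum_inv_pow_norm_pow_le {s : ℝ} (hs : 0 < s) (hs2 : s ^ 2 = 2 * Fintype.card α - 1)
    {k : ℕ} (hk : 2 ≤ k) {p : ℕ} (S : Finset (FreeGroup α)) (hS : ∀ x ∈ S, norm (x ^ k) ≤ p) :
    ∑ x ∈ S, s⁻¹ ^ norm (x ^ k) ≤ 2 * (p + 1) ^ 2 := by
  have : Nonempty α := Fintype.card_pos_iff.1 <| Nat.pos_of_ne_zero fun h => by
    simp [h] at hs2; nlinarith
  have hs1 : s⁻¹ ≤ 1 := inv_le_one_of_one_le₀ (by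
    have : (1 : ℝ) ≤ Fintype.card α := by exact_mod_cast Fintype.card_pos
    nlinarith)
  have hcode (x) (hx : x ∈ S) : 2 * norm (cyclicCode x).2 ≤ p :=
    (two_mul_norm_cyclicCode_snd_le hk x).trans (hS x hx)
  set T := S.image (cyclicCode · |>.2)
  calc ∑ x ∈ S, s⁻¹ ^ norm (x ^ k)
      ≤ ∑ x ∈ S, (s ^ 2)⁻¹ ^ norm (cyclicCode x).2 := sum_le_sum fun x _ => by
        rw [← inv_pow, ← pow_mul]
        exact pow_le_pow_of_le_one (by positivity) hs1 (two_mul_norm_cyclicCode_snd_le hk x)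
    _ = ∑ z ∈ S.image cyclicCode, (s ^ 2)⁻¹ ^ norm z.2 := by
        rw [sum_image fun x _ y _ h => cyclicCode_injective h]
    _ ≤ ∑ z ∈ range (p + 1) ×ˢ T, (s ^ 2)⁻¹ ^ norm z.2 := by
        refine sum_le_sum_of_subset_of_nonneg (fun z hz => ?_) fun _ _ _ => by positivity
        obtain ⟨x, hx, rfl⟩ := mem_image.1 hz
        have := cyclicCode_fst_le_norm_snd x
        have := hcode x hx
        exact mem_product.2 ⟨mem_range.2 (by omega), mem_image_of_mem _ hx⟩
    _ = (p + 1) * ∑ y ∈ T, (s ^ 2)⁻¹ ^ norm y := by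
        rw [sum_product]
        simp only [sum_const, card_range, nsmul_eq_mul, Nat.cast_add, Nat.cast_one]
    _ ≤ (p + 1) * (2 * (p + 1)) := by
        rw [hs2]
        gcongr
        refine sum_inv_pow_norm_le _ fun y hy => ?_
        obtain ⟨x, hx, rfl⟩ := mem_image.1 hy
        have := hcode x hx
        omega
    _ = 2 * (p + 1) ^ 2 := by ring

end FreeGroup

namespace SC

open FreeGroup

theorem ncard_ofFn_prod_eq_succ {G ι : Type*} [Group G] [Fintype ι] (g : ι → G) (p : ℕ)
    (x : G) :
    {t : Fin (p + 1) → ι | (List.ofFn fun i => g (t i)).prod = x}.ncard =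
      ∑ i, {t : Fin p → ι | (List.ofFn fun j => g (t j)).prod = (g i)⁻¹ * x}.ncard := by
  classical
  have hcount (n : ℕ) (y : G) : {t : Fin n → ι | (List.ofFn fun j => g (t j)).prod = y}.ncard =
      ∑ t : Fin n → ι, if (List.ofFn fun j => g (t j)).prod = y then 1 else 0 := by
    rw [Set.ncard_eq_toFinset_card', Set.toFinset_ofPred, Finset.card_filter]
  simp only [hcount]
  rw [← (Fin.consEquiv fun _ => ι).sum_comp, Fintype.sum_prod_type]
  simp only [Fin.consEquiv_apply, List.ofFn_succ, Fin.cons_zero, Fin.cons_succ, List.prod_cons,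
    eq_inv_mul_iff_mul_eq]

def letterEquiv (d : ℕ) : Fin d × Bool ≃ Fin (2 * d) :=
  (Equiv.prodComm _ _).trans <| (Equiv.boolProdEquivSum _).trans <|
    finSumFinEquiv.trans (finCongr (two_mul d).symm)

theorem inv_gen2d_letterEquiv (d : ℕ) (l : Fin d × Bool) :
    (gen2d d (letterEquiv d l))⁻¹ = mk [l] := by
  obtain ⟨a, _ | _⟩ := l
  · simp [letterEquiv, gen2d, Equiv.boolProdEquivSum, FreeGroup.of, invRev]
  · simp [letterEquiv, gen2d, Equiv.boolProdEquivSum, FreeGroup.of]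

theorem wordCount_succ (d p : ℕ) (x : FreeGroup (Fin d)) :
    wordCount d (p + 1) x = ∑ l : Fin d × Bool, wordCount d p (mk [l] * x) := by
  rw [wordCount, ncard_ofFn_prod_eq_succ]
  exact Fintype.sum_equiv (letterEquiv d).symm _ _ fun j => by
    rw [wordCount, ← inv_gen2d_letterEquiv, Equiv.apply_symm_apply]

theorem wordCount_zero (d : ℕ) (x : FreeGroup (Fin d)) :
    wordCount d 0 x = if x = 1 then 1 else 0 := by
  rcases eq_or_ne x 1 with rfl | hx <;> simp [wordCount, *, eq_comm]

theorem wordCount_eq_zero_of_lt {d p : ℕ} {x : FreeGroup (Fin d)} (h : p < x.norm) :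
    wordCount d p x = 0 := by
  induction p generalizing x with
  | zero => rw [wordCount_zero, if_neg (by rintro rfl; simp at h)]
  | succ p ih =>
    rw [wordCount_succ]
    refine Finset.sum_eq_zero fun l _ => ih ?_
    have := norm_le_norm_mk_singleton_mul_add_one l x
    omega

theorem wordCount_le {d : ℕ} {s : ℝ} (hs : 0 < s) (hs2 : s ^ 2 = 2 * d - 1) (p : ℕ)
    (x : FreeGroup (Fin d)) : (wordCount d p x : ℝ) ≤ (2 * s) ^ p * s⁻¹ ^ x.norm := by
  induction p generalizing x with
  | zero => rw [wordCount_zero]; split_ifs with h <;> simp [h]; positivity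
  | succ p ih =>
    calc (wordCount d (p + 1) x : ℝ) = ∑ l, (wordCount d p (mk [l] * x) : ℝ) := by
          rw [wordCount_succ, Nat.cast_sum]
      _ ≤ ∑ l, (2 * s) ^ p * s⁻¹ ^ (mk [l] * x).norm := Finset.sum_le_sum fun l _ => ih _
      _ = (2 * s) ^ p * ∑ l : Fin d × Bool, s⁻¹ ^ (mk [l] * x).norm := (Finset.mul_sum ..).symm
      _ ≤ (2 * s) ^ p * (2 * s * s⁻¹ ^ x.norm) := by
          gcongr
          exact sum_inv_pow_norm_mk_singleton_mul_le hs (by simpa using hs2) x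
      _ = (2 * s) ^ (p + 1) * s⁻¹ ^ x.norm := by ring

/-- **Friedman's counting bound (Lemma 8.3).** For every `d ≥ 2`, `k ≥ 2` and `p ≥ 1`:
`Σ_{v ∈ F_d^{np}} #{(i_1,…,i_p) ∈ {1,…,2d}^p : g_{i_1}⋯g_{i_p} = v^k}
  ≤ (p+1)^4 (2√(2d−1))^p`. -/
theorem nonpower_word_count_bound (d k p : ℕ) (hd : 2 ≤ d) (hk : 2 ≤ k) (hp : 1 ≤ p) :
    ∑' v : {v : FreeGroup (Fin d) // NonPower v},
        (wordCount d p ((v : FreeGroup (Fin d)) ^ k) : ℝ) ≤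
      ((p : ℝ) + 1) ^ 4 * (2 * Real.sqrt (2 * (d : ℝ) - 1)) ^ p := by
  set s := Real.sqrt (2 * (d : ℝ) - 1)
  have hd' : (2 : ℝ) ≤ d := by exact_mod_cast hd
  have hs : 0 < s := Real.sqrt_pos.2 (by linarith)
  have hs2 : s ^ 2 = 2 * d - 1 := Real.sq_sqrt (by linarith)
  refine Real.tsum_le_of_sum_le (fun v => Nat.cast_nonneg _) fun S => ?_
  set S' := (S.map (Function.Embedding.subtype _)).filter fun x => (x ^ k).norm ≤ p
  calc ∑ v ∈ S, (wordCount d p ((v : FreeGroup (Fin d)) ^ k) : ℝ)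
      = ∑ x ∈ S', (wordCount d p (x ^ k) : ℝ) := by
        rw [Finset.sum_filter_of_ne fun x _ h => ?_, Finset.sum_map]
        · rfl
        · by_contra hlt
          exact h (by rw [wordCount_eq_zero_of_lt (not_le.1 hlt), Nat.cast_zero])
    _ ≤ ∑ x ∈ S', (2 * s) ^ p * s⁻¹ ^ (x ^ k).norm :=
        Finset.sum_le_sum fun x _ => wordCount_le hs hs2 p _
    _ = (2 * s) ^ p * ∑ x ∈ S', s⁻¹ ^ (x ^ k).norm := (Finset.mul_sum ..).symm
    _ ≤ (2 * s) ^ p * (2 * (p + 1) ^ 2) := by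
        gcongr
        exact sum_inv_pow_norm_pow_le hs (by simpa using hs2) hk S' fun x hx =>
          (Finset.mem_filter.1 hx).2
    _ ≤ (2 * s) ^ p * ((p : ℝ) + 1) ^ 4 := by
        have : (1 : ℝ) ≤ p := by exact_mod_cast hp
        gcongr
        nlinarith [mul_le_mul this this (by norm_num) (by positivity)]
    _ = ((p : ℝ) + 1) ^ 4 * (2 * s) ^ p := mul_comm _ _

end SC
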